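/- Let Ω be a real antisymmetric matrix of odd order n. Then the adjugate adj(Ω) is a positive semidefinite symmetric matrix; in fact there exists a vector β ∈ ℝⁿ with adj(Ω) = β·βᵀ. -/

import Mathlib

open Matrix

/-! Since `n` is odd, `det Ω = 0`, so `adj Ω` has rank at most one: it vanishes when
`rank Ω < n - 1`, and otherwise `Ω * adj Ω = 0` gives
`rank Ω + rank (adj Ω) ≤ n`. It is symmetric
because `(-1)^(n-1) = 1`, and its diagonal entries are principal minors of `Ω`, i.e. determinants
of real skew matrices, which are nonnegative: `det (1 + s • A)` never vanishes (as `vᵀ A v = 0`)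
and equals `1` at `s = 0`, and `det A` is the limit of `tⁿ det (1 + t⁻¹ • A)` as `t → 0⁺`.
Finally a symmetric matrix of rank one with nonnegative diagonal is `β βᵀ`. -/

namespace Matrix

section Skew

variable {ι R : Type*} [Fintype ι] [CommRing R] {A : Matrix ι ι R}

lemma dotProduct_mulVec_self_eq_zero_of_transpose_eq_neg [IsAddTorsionFree R]
    (hA : Aᵀ = -A) (v : ι → R) : v ⬝ᵥ A *ᵥ v = 0 := by
  refine self_eq_neg.mp ?_
  calc v ⬝ᵥ A *ᵥ v = (Aᵀ *ᵥ v) ⬝ᵥ v := by rw [dotProduct_mulVec, mulVec_transpose]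
    _ = -(v ⬝ᵥ A *ᵥ v) := by rw [hA, neg_mulVec, neg_dotProduct, dotProduct_comm]

variable [DecidableEq ι]

lemma det_eq_zero_of_transpose_eq_neg [IsAddTorsionFree R] (hn : Odd (Fintype.card ι))
    (hA : Aᵀ = -A) : A.det = 0 :=
  self_eq_neg.mp <| calc
    A.det = Aᵀ.det := (det_transpose A).symm
    _ = -A.det := by rw [hA, det_neg, hn.neg_one_pow, neg_one_mul]

lemma isSymm_adjugate_of_transpose_eq_neg (hn : Odd (Fintype.card ι)) (hA : Aᵀ = -A) :
    A.adjugate.IsSymm := by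
  rw [IsSymm, adjugate_transpose, hA, ← neg_one_smul R A, adjugate_smul,
    (Nat.Odd.sub_odd hn odd_one).neg_one_pow, one_smul]

end Skew

section RealSkew

variable {ι : Type*} [Fintype ι] [DecidableEq ι] {A : Matrix ι ι ℝ}

lemma det_one_add_smul_pos_of_transpose_eq_neg (hA : Aᵀ = -A) (s : ℝ) :
    0 < (1 + s • A).det := by
  have hcont : Continuous fun s : ℝ => (1 + s • A).det := by fun_prop
  have hne : ∀ s : ℝ, (1 + s • A).det ≠ 0 := by
    intro s hdet
    obtain ⟨v, hv, hAv⟩ := exists_mulVec_eq_zero_iff.mpr hdet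
    exact hv <| by
      simpa [add_mulVec, smul_mulVec, dotProduct_add, dotProduct_smul,
        dotProduct_mulVec_self_eq_zero_of_transpose_eq_neg hA] using congrArg (v ⬝ᵥ ·) hAv
  by_contra! hle
  obtain ⟨t, ht⟩ := intermediate_value_univ s 0 hcont ⟨hle, by simp⟩
  exact hne t ht

lemma det_nonneg_of_transpose_eq_neg (hA : Aᵀ = -A) : 0 ≤ A.det := by
  have hpos : ∀ t : ℝ, 0 < t → 0 < (A + t • 1).det := by
    intro t ht
    have hfactor : A + t • 1 = t • (1 + t⁻¹ • A) := by
      rw [smul_add, smul_smul, mul_inv_cancel₀ ht.ne', one_smul, add_comm]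
    rw [hfactor, det_smul]
    exact mul_pos (pow_pos ht _) (det_one_add_smul_pos_of_transpose_eq_neg hA _)
  have hcont : Continuous fun t : ℝ => (A + t • 1).det := by fun_prop
  have hlim := (hcont.tendsto 0).mono_left (nhdsWithin_le_nhds (s := Set.Ioi 0))
  simpa using ge_of_tendsto hlim (eventually_nhdsWithin_of_forall fun t ht => (hpos t ht).le)

lemma adjugate_apply_self_nonneg_of_transpose_eq_neg {m : ℕ}
    {A : Matrix (Fin (m + 1)) (Fin (m + 1)) ℝ} (hA : Aᵀ = -A) (i : Fin (m + 1)) :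
    0 ≤ A.adjugate i i := by
  rw [adjugate_fin_succ_eq_det_submatrix, ← two_mul, pow_mul, neg_one_sq, one_pow, one_mul]
  apply det_nonneg_of_transpose_eq_neg
  rw [transpose_submatrix, hA]
  rfl

end RealSkew

section Rank

variable {K : Type*} [Field K]

lemma adjugate_eq_zero_of_rank_lt {m : ℕ} (A : Matrix (Fin (m + 1)) (Fin (m + 1)) K)
    (h : A.rank < m) : A.adjugate = 0 := by
  ext i j
  have hminor : (A.submatrix j.succAbove i.succAbove).det = 0 := by
    by_contra hdet
    have hfull := rank_of_det_ne_zero hdet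
    have := rank_submatrix_le A j.succAbove i.succAbove
    simp only [Fintype.card_fin] at hfull
    omega
  rw [adjugate_fin_succ_eq_det_submatrix, hminor, mul_zero, zero_apply]

lemma rank_adjugate_le_one_of_det_eq_zero {n : ℕ} {A : Matrix (Fin n) (Fin n) K}
    (h : A.det = 0) : A.adjugate.rank ≤ 1 := by
  rcases n with _ | m
  · exact (rank_le_width _).trans zero_le_one
  by_cases hA : A.rank < m
  · simp [adjugate_eq_zero_of_rank_lt A hA]
  · have := rank_add_rank_le_card_of_mul_eq_zero
      (by rw [mul_adjugate, h, zero_smul] : A * A.adjugate = 0)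
    simp only [Fintype.card_fin] at this
    omega

variable {m n : Type*} [Fintype n]

lemma apply_mul_apply_eq_of_rank_le_one {S : Matrix m n K} (h : S.rank ≤ 1) (i j : m)
    (p q : n) : S i p * S j q = S i q * S j p := by
  have hminor : (S.submatrix ![i, j] ![p, q]).det = 0 := by
    by_contra hdet
    have hfull := rank_of_det_ne_zero hdet
    have := rank_submatrix_le S ![i, j] ![p, q]
    simp only [Fintype.card_fin] at hfull
    omega
  rw [det_fin_two] at hminor
  simpa [sub_eq_zero] using hminor

end Rank

lemma exists_eq_vecMulVec_self_of_rank_le_one {ι : Type*} [Fintype ι] {S : Matrix ι ι ℝ}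
    (hS : S.IsSymm) (hrank : S.rank ≤ 1) (hdiag : ∀ i, 0 ≤ S i i) :
    ∃ β : ι → ℝ, S = vecMulVec β β := by
  have hminor := apply_mul_apply_eq_of_rank_le_one hrank
  by_cases hzero : ∀ i, S i i = 0
  · refine ⟨0, ?_⟩
    ext p q
    have hsq : S p q * S q p = 0 := by rw [← hminor, hzero, zero_mul]
    simpa [hS.apply p q] using hsq
  push Not at hzero
  obtain ⟨i, hi⟩ := hzero
  have hpos : 0 < S i i := (hdiag i).lt_of_ne' hi
  refine ⟨fun p => S i p / √(S i i), ?_⟩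
  ext p q
  rw [vecMulVec_apply, div_mul_div_comm, Real.mul_self_sqrt hpos.le, eq_div_iff hi, mul_comm,
    hminor, hS.apply i p, mul_comm]

end Matrix

theorem adjugate_skew_odd_posSemidef {n : ℕ} (hn : Odd n)
    (Ω : Matrix (Fin n) (Fin n) ℝ) (hΩ : Ωᵀ = -Ω) :
    (Ω.adjugate).PosSemidef ∧ ∃ β : Fin n → ℝ, Ω.adjugate = vecMulVec β β := by
  obtain ⟨m, rfl⟩ := Nat.exists_eq_add_one.mpr hn.pos
  have hcard : Odd (Fintype.card (Fin (m + 1))) := by rwa [Fintype.card_fin]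
  obtain ⟨β, hβ⟩ := exists_eq_vecMulVec_self_of_rank_le_one
    (isSymm_adjugate_of_transpose_eq_neg hcard hΩ)
    (rank_adjugate_le_one_of_det_eq_zero (det_eq_zero_of_transpose_eq_neg hcard hΩ))
    (adjugate_apply_self_nonneg_of_transpose_eq_neg hΩ)
  refine ⟨?_, β, hβ⟩
  simpa [hβ] using posSemidef_vecMulVec_self_star β
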